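/- Let A be a Hermitian n×n complex matrix with spectral resolution E (E(δ) the orthogonal projection onto the sum of eigenspaces over eigenvalues in δ), let W be an n×r complex matrix with Wᴴ W = I_r, and define the r×r matrix measure Σ(δ) := Wᴴ E(δ) W. Then the column space of W (the range of the linear map x ↦ Wx) is a cyclic subspace for A — i.e. span{ A^k W x : k ∈ ℕ, x ∈ ℂʳ } = ℂⁿ — if and only if Σ is spectrally equivalent to E, i.e. for every eigenvalue λ of A, rank(Wᴴ P_λ W) = dim ker(A − λI), where P_λ is the orthogonal projection onto ker(A − λI). -/

import Mathlib

open MeasureTheory Module Matrix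

/-- The self-adjoint endomorphism of `ℂⁿ` (with the Euclidean inner product)
associated with a matrix `A`. -/
noncomputable def matEnd (n : ℕ) (A : Matrix (Fin n) (Fin n) ℂ) :
    Module.End ℂ (EuclideanSpace ℂ (Fin n)) :=
  Matrix.toEuclideanLin A

/-- The matrix of the orthogonal projection `P_μ` of `ℂⁿ` onto the eigenspace
`ker (A - μ)` of a matrix `A`. -/
noncomputable def eigProj (n : ℕ) (A : Matrix (Fin n) (Fin n) ℂ) (μ : ℂ) :
    Matrix (Fin n) (Fin n) ℂ :=
  Matrix.toEuclideanLin.symm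
    (((matEnd n A).eigenspace μ).subtype ∘ₗ
      (Submodule.orthogonalProjection ((matEnd n A).eigenspace μ)).toLinearMap)

/-!
For `y` in the `μ`-eigenspace of a symmetric `T` and `P_μ` the orthogonal projection onto it,
`y ⊥ P_μ L ↔ y ⊥ L ↔ y ⊥ Tᵏ L` for all `k`, because `P_μ y = y` and `Tᵏ y = μᵏ y`. So `P_μ L` fills
the eigenspace exactly when the orthogonal complement of the Krylov space `⨆ₖ Tᵏ L` meets it
trivially. That complement is `T`-invariant, hence zero as soon as it contains no eigenvector.
On the matrix side, `P_μ` is a self-adjoint idempotent, so `Wᴴ P_μ W = (P_μ W)ᴴ (P_μ W)` has the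
rank of `P_μ W`, the dimension of `P_μ (range W)`.
-/

open Submodule

namespace Module.End

variable {R M : Type*} [Semiring R] [AddCommMonoid M] [Module R M]

def krylovSubspace (T : End R M) (L : Submodule R M) : Submodule R M :=
  ⨆ k : ℕ, L.map (T ^ k)

variable (T : End R M) (L : Submodule R M)

lemma le_krylovSubspace : L ≤ T.krylovSubspace L :=
  le_iSup_of_le 0 (by rw [pow_zero, one_eq_id, Submodule.map_id])

lemma krylovSubspace_mem_invtSubmodule : T.krylovSubspace L ∈ T.invtSubmodule := by
  rw [mem_invtSubmodule_iff_map_le, krylovSubspace, Submodule.map_iSup]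
  refine iSup_le fun k => ?_
  rw [← map_comp, ← mul_eq_comp, ← pow_succ']
  exact le_iSup (fun k : ℕ => L.map (T ^ k)) (k + 1)

lemma eq_bot_of_inf_eigenspace_eq_bot {K V : Type*} [Field K] [IsAlgClosed K] [AddCommGroup V]
    [Module K V] [FiniteDimensional K V] {f : End K V} {p : Submodule K V}
    (hp : p ∈ f.invtSubmodule) (h : ∀ μ, f.HasEigenvalue μ → p ⊓ f.eigenspace μ = ⊥) :
    p = ⊥ := by
  by_contra hne
  have : Nontrivial p := nontrivial_iff_ne_bot.mpr hne
  obtain ⟨μ, hμ⟩ := exists_eigenvalue (f.restrict hp)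
  obtain ⟨v, hv⟩ := hμ.exists_hasEigenvector
  have hvf : f.HasEigenvector μ v :=
    ⟨mem_eigenspace_iff.mpr (congrArg Subtype.val hv.apply_eq_smul), by simpa using hv.2⟩
  have := h μ (hasEigenvalue_of_hasEigenvector hvf)
  exact hvf.2 ((Submodule.eq_bot_iff _).mp this v ⟨v.2, hvf.1⟩)

end Module.End

namespace Submodule

variable {𝕜 E : Type*} [RCLike 𝕜] [NormedAddCommGroup E] [InnerProductSpace 𝕜 E]

lemma inf_orthogonal_map_starProjection (K L : Submodule 𝕜 E) [K.HasOrthogonalProjection] :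
    K ⊓ (L.map (K.starProjection : E →ₗ[𝕜] E))ᗮ = K ⊓ Lᗮ := by
  ext y
  simp only [mem_inf, and_congr_right_iff]
  intro hy
  simp only [mem_orthogonal, mem_map, ContinuousLinearMap.coe_coe, forall_exists_index, and_imp,
    forall_apply_eq_imp_iff₂, inner_starProjection_left_eq_right, starProjection_eq_self_iff.mpr hy]

lemma map_starProjection_le (K L : Submodule 𝕜 E) [K.HasOrthogonalProjection] :
    L.map (K.starProjection : E →ₗ[𝕜] E) ≤ K :=
  map_le_iff_le_comap.mpr fun x _ => starProjection_apply_mem K x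

lemma map_starProjection_eq_self_iff [FiniteDimensional 𝕜 E] {K L : Submodule 𝕜 E} :
    L.map (K.starProjection : E →ₗ[𝕜] E) = K ↔ K ⊓ Lᗮ = ⊥ := by
  rw [← inf_orthogonal_map_starProjection]
  constructor
  · intro h
    rw [h, inf_orthogonal_eq_bot]
  · intro h
    rw [inf_comm] at h
    simpa [h] using sup_orthogonal_inf_of_hasOrthogonalProjection (map_starProjection_le K L)

end Submodule

namespace LinearMap.IsSymmetric

open Module.End

variable {E : Type*} [NormedAddCommGroup E]

lemma orthogonal_krylovSubspace_inf_eigenspace {𝕜 : Type*} [RCLike 𝕜] [InnerProductSpace 𝕜 E]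
    {T : Module.End 𝕜 E} (hT : T.IsSymmetric) (L : Submodule 𝕜 E) (μ : 𝕜) :
    (T.krylovSubspace L)ᗮ ⊓ T.eigenspace μ = Lᗮ ⊓ T.eigenspace μ := by
  refine le_antisymm (inf_le_inf_right _ (orthogonal_le (le_krylovSubspace T L))) ?_
  intro y hy
  obtain ⟨hyL, hyμ⟩ := mem_inf.mp hy
  refine mem_inf.mpr ⟨?_, hyμ⟩
  rw [krylovSubspace, ← iInf_orthogonal, mem_iInf]
  rintro k _ ⟨x, hx, rfl⟩
  have hpow : (T ^ k) y = μ ^ k • y := by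
    by_cases hy : y = 0
    · simp [hy]
    · exact HasEigenvector.pow_apply ⟨hyμ, hy⟩ k
  rw [hT.pow k, hpow, inner_smul_right, inner_right_of_mem_orthogonal hx hyL, mul_zero]

theorem krylovSubspace_eq_top_iff [InnerProductSpace ℂ E] [FiniteDimensional ℂ E]
    {T : Module.End ℂ E} (hT : T.IsSymmetric) (L : Submodule ℂ E) :
    T.krylovSubspace L = ⊤ ↔ ∀ μ, T.HasEigenvalue μ →
      L.map ((T.eigenspace μ).starProjection : E →ₗ[ℂ] E) = T.eigenspace μ := by
  simp only [← orthogonal_eq_bot_iff, map_starProjection_eq_self_iff, inf_comm (T.eigenspace _),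
    ← hT.orthogonal_krylovSubspace_inf_eigenspace L]
  refine ⟨fun h μ _ => by rw [h, bot_inf_eq], fun h => ?_⟩
  exact eq_bot_of_inf_eigenspace_eq_bot
    (hT.orthogonalComplement_mem_invtSubmodule (krylovSubspace_mem_invtSubmodule T L)) h

end LinearMap.IsSymmetric

lemma Matrix.rank_eq_finrank_range_toLpLin {m n R : Type*} [Fintype m] [Fintype n] [DecidableEq n]
    [CommRing R] (p q : ENNReal) (M : Matrix m n R) :
    M.rank = Module.finrank R (LinearMap.range (toLpLin p q M)) :=
  M.rank_eq_finrank_range_toLin (PiLp.basisFun q R m) (PiLp.basisFun p R n)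

lemma Matrix.rank_conjTranspose_mul_mul_of_isStarProjection {m n R : Type*} [Fintype m]
    [Fintype n] [Field R] [PartialOrder R] [StarRing R] [StarOrderedRing R] {P : Matrix m m R}
    (hP : IsStarProjection P) (W : Matrix m n R) : (Wᴴ * P * W).rank = (P * W).rank := by
  have : Wᴴ * P * W = (P * W)ᴴ * (P * W) := by
    rw [conjTranspose_mul, ← star_eq_conjTranspose P, hP.isSelfAdjoint.star_eq, Matrix.mul_assoc,
      Matrix.mul_assoc, ← Matrix.mul_assoc P, hP.isIdempotentElem.eq]
  rw [this, rank_conjTranspose_mul_self]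

lemma toEuclideanCLM_eigProj (n : ℕ) (A : Matrix (Fin n) (Fin n) ℂ) (μ : ℂ) :
    toEuclideanCLM (n := Fin n) (𝕜 := ℂ) (eigProj n A μ) =
      ((matEnd n A).eigenspace μ).starProjection :=
  ContinuousLinearMap.coe_injective (toEuclideanLin.apply_symm_apply _)

lemma isStarProjection_eigProj (n : ℕ) (A : Matrix (Fin n) (Fin n) ℂ) (μ : ℂ) :
    IsStarProjection (eigProj n A μ) := by
  have h := isStarProjection_starProjection (U := (matEnd n A).eigenspace μ)
  rw [← toEuclideanCLM_eigProj, isStarProjection_iff', ← map_mul, ← map_star] at h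
  exact isStarProjection_iff'.mpr ⟨toEuclideanCLM.injective h.1, toEuclideanCLM.injective h.2⟩

open scoped ComplexOrder in
lemma rank_conjTranspose_mul_eigProj_mul (n r : ℕ) (A : Matrix (Fin n) (Fin n) ℂ) (μ : ℂ)
    (W : Matrix (Fin n) (Fin r) ℂ) :
    (Wᴴ * eigProj n A μ * W).rank = Module.finrank ℂ ((LinearMap.range (toEuclideanLin W)).map
      (((matEnd n A).eigenspace μ).starProjection :
        EuclideanSpace ℂ (Fin n) →ₗ[ℂ] EuclideanSpace ℂ (Fin n))) := by
  rw [rank_conjTranspose_mul_mul_of_isStarProjection (isStarProjection_eigProj n A μ),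
    rank_eq_finrank_range_toLpLin 2 2, toLpLin_mul_same, LinearMap.range_comp,
    ← toEuclideanCLM_eigProj]
  rfl

theorem stmt_13_general (n r : ℕ) (A : Matrix (Fin n) (Fin n) ℂ) (hA : A.IsHermitian)
    (W : Matrix (Fin n) (Fin r) ℂ) :
    (⨆ k : ℕ, Submodule.map (matEnd n A ^ k)
        (LinearMap.range (Matrix.toEuclideanLin W))) = ⊤ ↔
    (∀ μ : ℂ, (matEnd n A).HasEigenvalue μ →
      (Wᴴ * eigProj n A μ * W).rank =
        Module.finrank ℂ ((matEnd n A).eigenspace μ)) := by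
  have hT : (matEnd n A).IsSymmetric := isSymmetric_toEuclideanLin_iff.mpr hA
  refine (hT.krylovSubspace_eq_top_iff _).trans (forall₂_congr fun μ _ => ?_)
  rw [rank_conjTranspose_mul_eigProj_mul]
  exact ⟨fun h => by rw [h], eq_of_le_of_finrank_eq (map_starProjection_le _ _)⟩

/-- **Theorem 2(c), finite-dimensional case.**
Let `A` be a Hermitian `n × n` matrix with resolution of identity `E`, let `W` be an
`n × r` matrix with `Wᴴ W = I`, and let `S(δ) = Wᴴ E(δ) W` be the compressed measure.
Then the column space of `W` is a cyclic subspace for `A` if and only if `S` is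
spectrally equivalent to `E`, i.e. `rank (Wᴴ P_λ W) = dim ker (A - λ)` for every
eigenvalue `λ` of `A` (`P_λ` the orthogonal projection onto `ker (A - λ)`). -/
theorem stmt_13 (n r : ℕ) (A : Matrix (Fin n) (Fin n) ℂ) (hA : A.IsHermitian)
    (W : Matrix (Fin n) (Fin r) ℂ) (hW : Wᴴ * W = 1) :
    (⨆ k : ℕ, Submodule.map (matEnd n A ^ k)
        (LinearMap.range (Matrix.toEuclideanLin W))) = ⊤ ↔
    (∀ μ : ℂ, (matEnd n A).HasEigenvalue μ →
      (Wᴴ * eigProj n A μ * W).rank =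
        Module.finrank ℂ ((matEnd n A).eigenspace μ)) :=
  stmt_13_general n r A hA W
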